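/- arXiv:1609.01144 — 2 statements merged into one kernel-verified Lean document; each statement's English description precedes it below -/
import Mathlib

section
/- If f : Σ* → Σ* is RCP and u, v ∈ Σ* satisfy |u| = |v|, then |f(u)| = |f(v)|. -/
/-- A congruence on the free monoid `List S`: an equivalence relation compatible
with concatenation. -/
def IsCong {S : Type*} (r : List S → List S → Prop) : Prop :=
  Equivalence r ∧ ∀ x y u v : List S, r x y → r u v → r (x ++ u) (y ++ v)

/-- A monoid homomorphism from the free monoid `List S` to itself. -/
def IsHom {S : Type*} (φ : List S → List S) : Prop :=
  φ [] = [] ∧ ∀ x y : List S, φ (x ++ y) = φ x ++ φ y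

/-- `f` is congruence preserving. -/
def IsCP {S : Type*} (f : List S → List S) : Prop :=
  ∀ r : List S → List S → Prop, IsCong r → ∀ x y : List S, r x y → r (f x) (f y)

/-- `f` preserves all restricted congruences (kernels of endomorphisms of the free monoid). -/
def IsRCP {S : Type*} (f : List S → List S) : Prop :=
  ∀ φ : List S → List S, IsHom φ → ∀ x y : List S, φ x = φ y → φ (f x) = φ (f y)

/-- `f x = w₀ x w₁ x ⋯ x wₙ` for fixed words `w₀, …, wₙ`. -/
def PolyForm {S : Type*} (f : List S → List S) : Prop :=
  ∃ (n : ℕ) (w : ℕ → List S), ∀ x : List S,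
    f x = w 0 ++ List.flatten ((List.range n).map fun i => x ++ w (i + 1))


theorem isHom_map {S : Type*} (g : S → S) : IsHom (List.map g) :=
  ⟨rfl, fun _ _ => List.map_append⟩

theorem List.map_const_eq_map_const_iff {α β : Type*} (b : β) {x y : List α} :
    x.map (fun _ => b) = y.map (fun _ => b) ↔ x.length = y.length := by
  simp [List.map_const', List.replicate_inj]

/-- If `f` is RCP and `|u| = |v|` then `|f u| = |f v|`. -/
theorem stmt_4 {S : Type*} [Nonempty S] (f : List S → List S) (hf : IsRCP f)
    (u v : List S) (h : u.length = v.length) : (f u).length = (f v).length := by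
  obtain ⟨a⟩ := ‹Nonempty S›
  -- The kernel of the endomorphism sending every letter to `a` is "same length".
  exact (List.map_const_eq_map_const_iff a).mp <|
    hf _ (isHom_map _) u v ((List.map_const_eq_map_const_iff a).mpr h)
end

section
/- Assume Σ has at least 3 elements and f : Σ* → Σ* is RCP. Then exactly one of the following three conditions holds: (C₁) there exists a letter b ∈ Σ such that f(x) ∈ bΣ* for all x ∈ Σ*; (C₂) f(x) ∈ xΣ* for all x ∈ Σ*; (C₃) f is constant on Σ* with value ε. -/
/-! Two kinds of endomorphisms do all the work: the letter maps `collapse a s`, which keep `a`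
and send every other letter to `s`, and the substitutions `substLetter c u`, which replace `c` by
the word `u`. When `c ∉ u` the substitution identifies `[c]` with `u`, so RCP ties `f u` to `f [c]`;
letter maps show that `|f x|`, and the positions of `c` in `f x` for `c`-free `x`, depend only on
`|x|`.

If some `f [r]` is empty, these two facts make `f` constantly `ε`. Otherwise, comparing `f [t]`
and `f [s]` under the letter map `t ↦ s` shows that the first letter of `f [r]` is either always
`r` or a constant `b`, and with three letters available the substitutions carry this from letters
to all words. For the prefix property the test word `p q⋯q` does the job: an early occurrence of
`c` in `f (p q⋯q)` would make `p q⋯q` overlap itself after the substitution `c ↦ p q⋯q`. -/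

section

variable {S : Type*}

theorem exists_ne_ne {c₁ c₂ c₃ : S} (h12 : c₁ ≠ c₂) (h13 : c₁ ≠ c₃) (h23 : c₂ ≠ c₃) (a b : S) :
    ∃ c, c ≠ a ∧ c ≠ b := by
  by_contra! h
  rcases eq_or_ne c₁ a with rfl | h1
  · exact h23 ((h c₂ (Ne.symm h12)).trans (h c₃ (Ne.symm h13)).symm)
  rcases eq_or_ne c₂ a with rfl | h2
  · exact h13 ((h c₁ h12).trans (h c₃ (Ne.symm h23)).symm)
  · exact h12 ((h c₁ h1).trans (h c₂ h2).symm)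

theorem forall_eq_self_or_exists_forall_eq {c₁ c₂ c₃ : S} (h12 : c₁ ≠ c₂) (h13 : c₁ ≠ c₃)
    (h23 : c₂ ≠ c₃) {h : S → S} (H : ∀ t s, h t = t ∨ h s = t ∨ h t = h s) :
    (∀ r, h r = r) ∨ ∃ b, ∀ r, h r = b := by
  by_cases hid : ∀ r, h r = r
  · exact Or.inl hid
  obtain ⟨t, ht⟩ := not_forall.mp hid
  refine Or.inr ⟨h t, fun r => by_contra fun hr => ?_⟩
  have htr : t ≠ r := by rintro rfl; exact hr rfl
  obtain ⟨r', hr't, hr'r⟩ := exists_ne_ne h12 h13 h23 t r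
  have := H t r; have := H r t; have := H t r'; have := H r' t; have := H r r'; have := H r' r
  grind

theorem isHom_flatMap (g : S → List S) : IsHom (fun x => x.flatMap g) :=
  ⟨List.flatMap_nil, fun _ _ => List.flatMap_append⟩

section

variable [DecidableEq S]

def substLetter (c : S) (u : List S) (a : S) : List S := if a = c then u else [a]

def collapse (a s x : S) : S := if x = a then a else s

@[simp] theorem substLetter_self (c : S) (u : List S) : substLetter c u c = u := if_pos rfl

theorem substLetter_of_ne {a c : S} (u : List S) (h : a ≠ c) : substLetter c u a = [a] := if_neg h

theorem substLetter_eq_nil_iff {a c : S} {u : List S} :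
    substLetter c u a = [] ↔ a = c ∧ u = [] := by
  unfold substLetter
  split_ifs with h <;> simp [h]

theorem flatMap_substLetter_of_not_mem {c : S} {l : List S} (u : List S) (h : c ∉ l) :
    l.flatMap (substLetter c u) = l := by
  conv_rhs => rw [← List.flatMap_singleton' l]
  exact List.flatMap_congr fun a ha => substLetter_of_ne u (ne_of_mem_of_not_mem ha h)

theorem take_flatMap_substLetter {c : S} (u : List S) :
    ∀ {l : List S} {n : ℕ}, c ∉ l.take n → (l.flatMap (substLetter c u)).take n = l.take n
  | [], _, _ => rfl
  | _ :: _, 0, _ => rfl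
  | a :: l, n + 1, h => by
    rw [List.take_succ_cons, List.mem_cons, not_or] at h
    rw [List.flatMap_cons, substLetter_of_ne u (Ne.symm h.1), List.singleton_append,
      List.take_succ_cons, List.take_succ_cons, take_flatMap_substLetter u h.2]

theorem head?_of_head?_flatMap_substLetter {b c : S} {l u : List S}
    (h : (l.flatMap (substLetter c u)).head? = some b) (hbc : b ≠ c) :
    l.head? = some b ∨ l.head? = some c ∧ ∀ a, u.head? = some a → a = b := by
  cases l with
  | nil => simp at h
  | cons a l =>
    by_cases hac : a = c
    · subst hac
      refine Or.inr ⟨rfl, fun a' ha' => ?_⟩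
      rw [List.flatMap_cons, substLetter_self, List.head?_append, ha'] at h
      exact Option.some_injective _ h
    · rw [List.flatMap_cons, substLetter_of_ne u hac, List.singleton_append] at h
      exact Or.inl h

theorem collapse_self (a s : S) : collapse a s a = a := if_pos rfl

theorem collapse_eq_self_iff {a s x : S} (hs : s ≠ a) : collapse a s x = a ↔ x = a := by
  unfold collapse
  split_ifs with h <;> simp [h, hs]

theorem collapse_collapse {a s : S} (hs : s ≠ a) (x : S) :
    collapse a s (collapse a s x) = collapse a s x := by
  unfold collapse
  split_ifs <;> simp_all

theorem map_collapse_of_not_mem {a s : S} {l : List S} (h : a ∉ l) :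
    l.map (collapse a s) = List.replicate l.length s :=
  List.map_eq_replicate_iff.mpr fun _ hx => if_neg (ne_of_mem_of_not_mem hx h)

theorem mem_map_collapse_iff {a s : S} (hs : s ≠ a) {l : List S} :
    a ∈ l.map (collapse a s) ↔ a ∈ l := by
  simp [collapse_eq_self_iff hs]

theorem not_mem_map_collapse {a s c : S} (hca : c ≠ a) (hcs : c ≠ s) (l : List S) :
    c ∉ l.map (collapse a s) := by
  simp only [List.mem_map, collapse, not_exists, not_and]
  intro x _ h
  split_ifs at h <;> simp_all

theorem prefix_of_forall_map_collapse_prefix {x l : List S} (s : S → S) (hs : ∀ a, s a ≠ a)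
    (h : ∀ a, x.map (collapse a (s a)) <+: l.map (collapse a (s a))) : x <+: l := by
  rw [List.prefix_iff_getElem]
  refine ⟨?_, fun i hi => ?_⟩
  · cases x with
    | nil => simp
    | cons a _ => simpa using (h a).length_le
  · have := (h x[i]).getElem (i := i) (by simpa using hi)
    rw [List.getElem_map, List.getElem_map, collapse_self, eq_comm,
      collapse_eq_self_iff (hs _)] at this
    exact this.symm

end

namespace IsRCP

variable {f : List S → List S} (hf : IsRCP f)
include hf

theorem flatMap_eq (g : S → List S) {x y : List S} (h : x.flatMap g = y.flatMap g) :
    (f x).flatMap g = (f y).flatMap g :=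
  hf _ (isHom_flatMap g) x y h

theorem map_eq (m : S → S) {x y : List S} (h : x.map m = y.map m) :
    (f x).map m = (f y).map m := by
  simp only [List.map_eq_flatMap] at h ⊢
  exact hf.flatMap_eq _ h

theorem length_eq {x y : List S} (h : x.length = y.length) : (f x).length = (f y).length := by
  cases x with
  | nil => rw [List.length_eq_zero_iff.mp h.symm]
  | cons a x =>
    have := hf.map_eq (fun _ => a) (x := a :: x) (y := y)
      (by rw [List.map_const', List.map_const', h])
    simpa using congrArg List.length this

theorem map_map_eq_of_idem {m : S → S} (hm : ∀ a, m (m a) = m a) (x : List S) :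
    (f (x.map m)).map m = (f x).map m :=
  hf.map_eq m (by simp [Function.comp_def, hm])

section

variable [DecidableEq S]

theorem head_eq_or_eq {t s a b : S} (ht : (f [t]).head? = some a) (hs : (f [s]).head? = some b) :
    a = t ∨ b = t ∨ a = b := by
  have := congrArg List.head? (hf.map_eq (Function.update id t s) (x := [t]) (y := [s])
    (by by_cases hst : s = t <;> simp [hst, Function.update_of_ne]))
  rw [List.head?_map, List.head?_map, ht, hs] at this
  by_cases hat : a = t
  · exact Or.inl hat
  by_cases hbt : b = t
  · exact Or.inr (Or.inl hbt)
  exact Or.inr (Or.inr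
    (by simpa [Function.update_of_ne hat, Function.update_of_ne hbt] using this))

theorem flatMap_substLetter_eq {c : S} {x : List S} (hc : c ∉ x) :
    (f [c]).flatMap (substLetter c x) = (f x).flatMap (substLetter c x) :=
  hf.flatMap_eq _ (by simp [flatMap_substLetter_of_not_mem x hc])

theorem mem_take_iff_of_length_eq {c : S} {x y : List S} (hx : c ∉ x) (hy : c ∉ y)
    (hxy : x.length = y.length) (k : ℕ) : c ∈ (f x).take k ↔ c ∈ (f y).take k := by
  cases x with
  | nil => rw [List.length_eq_zero_iff.mp hxy.symm]
  | cons p x =>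
    have hp : p ≠ c := fun h => hx (h ▸ List.mem_cons_self)
    have := hf.map_eq (collapse c p) (x := p :: x) (y := y)
      (by rw [map_collapse_of_not_mem hx, map_collapse_of_not_mem hy, hxy])
    rw [← mem_map_collapse_iff hp, ← mem_map_collapse_iff hp (l := (f y).take k), List.map_take,
      List.map_take, this]

theorem eq_nil_of_singleton_eq_nil [Nontrivial S] {r : S} (hr : f [r] = []) (x : List S) :
    f x = [] := by
  obtain ⟨t, htr⟩ := exists_ne r
  have ht : f [t] = [] := List.length_eq_zero_iff.mp
    ((hf.length_eq (x := [t]) (y := [r]) rfl).trans (by simp [hr]))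
  have erase {c : S} {u : List S} (hcu : c ∉ u) (hc : f [c] = []) :
      ∀ a ∈ f u, a = c ∧ u = [] := by
    have := hf.flatMap_substLetter_eq hcu
    rw [hc, List.flatMap_nil, eq_comm, List.flatMap_eq_nil_iff] at this
    exact fun a ha => substLetter_eq_nil_iff.mp (this a ha)
  cases x with
  | nil =>
    refine List.eq_nil_iff_forall_not_mem.mpr fun a ha => htr ?_
    rw [← (erase List.not_mem_nil ht a ha).1, (erase List.not_mem_nil hr a ha).1]
  | cons _ x =>
    have hrep : f (List.replicate (x.length + 1) r) = [] :=
      List.eq_nil_iff_forall_not_mem.mpr fun a ha =>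
        by simpa using (erase (by simp [htr]) ht a ha).2
    exact List.length_eq_zero_iff.mp ((hf.length_eq (by simp)).trans (congrArg _ hrep))

section FirstLetter

variable {b : S} (hb : ∀ r, (f [r]).head? = some b)
include hb

theorem head?_cases_of_not_mem {c : S} {x : List S} (hc : c ∉ x) (hbc : b ≠ c) :
    (f x).head? = some b ∨ (f x).head? = some c ∧ ∀ a, x.head? = some a → a = b := by
  obtain ⟨w, hw⟩ := List.head?_eq_some_iff.mp (hb c)
  refine head?_of_head?_flatMap_substLetter ?_ hbc
  rw [← hf.flatMap_substLetter_eq hc, hw, List.flatMap_cons, substLetter_of_ne x hbc]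
  rfl

theorem head?_nil {t c : S} (htc : t ≠ c) (hbt : b ≠ t) (hbc : b ≠ c) :
    (f []).head? = some b := by
  rcases hf.head?_cases_of_not_mem hb List.not_mem_nil hbt with h | ⟨ht, -⟩
  · exact h
  rcases hf.head?_cases_of_not_mem hb List.not_mem_nil hbc with h | ⟨hc, -⟩
  · exact h
  exact absurd (Option.some_injective _ (ht.symm.trans hc)) htc

theorem head?_of_not_mem {t c : S} (htc : t ≠ c) (hbt : b ≠ t) (hbc : b ≠ c) {x : List S}
    (hx : x ≠ []) (hc : c ∉ x) : (f x).head? = some b := by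
  have hrep : (f (List.replicate x.length t)).head? = some b := by
    rcases hf.head?_cases_of_not_mem hb (x := List.replicate x.length t) (by simp [htc.symm]) hbc
      with h | ⟨-, h⟩
    · exact h
    · exact absurd (h t (by simpa [List.head?_replicate] using hx)).symm hbt
  rcases hf.head?_cases_of_not_mem hb hc hbc with h | ⟨h, -⟩
  · exact h
  have := (hf.mem_take_iff_of_length_eq hc (y := List.replicate x.length t) (by simp [htc.symm])
    (by simp) 1).mp
  simp only [List.take_one, Option.mem_toList, h, hrep, forall_const, Option.some.injEq] at this
  exact absurd this hbc

theorem head?_eq_of_forall_singleton {c₁ c₂ c₃ : S} (h12 : c₁ ≠ c₂) (h13 : c₁ ≠ c₃)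
    (h23 : c₂ ≠ c₃) (x : List S) : (f x).head? = some b := by
  obtain ⟨t, htb, -⟩ := exists_ne_ne h12 h13 h23 b b
  obtain ⟨c, hcb, hct⟩ := exists_ne_ne h12 h13 h23 b t
  cases x with
  | nil => exact hf.head?_nil hb hct.symm htb.symm hcb.symm
  | cons a x =>
    have hy := hf.head?_of_not_mem hb hct.symm htb.symm hcb.symm
      (x := (a :: x).map (collapse b t)) (by simp) (not_mem_map_collapse hcb hct _)
    have := congrArg List.head? (hf.map_map_eq_of_idem (collapse_collapse htb) (a :: x))
    rw [List.head?_map, List.head?_map, hy, Option.map_some, collapse_self, eq_comm,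
      Option.map_eq_some_iff] at this
    obtain ⟨a', ha', hab⟩ := this
    rwa [← (collapse_eq_self_iff htb).mp hab]

end FirstLetter

section Prefix

variable (hr : ∀ r, (f [r]).head? = some r)
include hr

theorem prefix_flatMap_substLetter {c : S} {x : List S} (hc : c ∉ x) :
    x <+: (f x).flatMap (substLetter c x) := by
  obtain ⟨w, hw⟩ := List.head?_eq_some_iff.mp (hr c)
  rw [← hf.flatMap_substLetter_eq hc, hw, List.flatMap_cons, substLetter_self]
  exact List.prefix_append _ _

theorem not_mem_take_one {c p q : S} (hpc : p ≠ c) (hqc : q ≠ c) (hpq : p ≠ q) {x : List S}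
    (hx : x ≠ []) (hc : c ∉ x) : c ∉ (f x).take 1 := by
  set z := List.replicate x.length q
  rw [hf.mem_take_iff_of_length_eq hc (y := z) (by simp [z, hqc.symm]) (by simp [z]),
    List.take_one, Option.mem_toList]
  intro hz
  obtain ⟨R, hR⟩ := List.head?_eq_some_iff.mp hz
  have hpre := hf.prefix_flatMap_substLetter hr (c := p) (x := z) (by simp [z, hpq])
  rw [hR, List.flatMap_cons, substLetter_of_ne z hpc.symm] at hpre
  have := hpre.getElem (i := 0) (by simpa [z, List.length_pos_iff] using hx)
  exact hqc (by simpa [z] using this)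

theorem not_mem_take_length {c p q : S} (hpc : p ≠ c) (hqc : q ≠ c) (hpq : p ≠ q) {x : List S}
    (hc : c ∉ x) : c ∉ (f x).take x.length := by
  cases x with
  | nil => simp
  | cons _ x =>
    set z := p :: List.replicate x.length q
    have hcz : c ∉ z := by simp [z, hpc.symm, hqc.symm]
    rw [hf.mem_take_iff_of_length_eq hc hcz (by simp [z])]
    intro hmem
    obtain ⟨T, R, hTR, hcT⟩ := List.eq_append_cons_of_mem (List.mem_of_mem_take hmem)
    have hT : T.length < z.length := by
      by_contra! hle
      rw [hTR, List.take_append_of_le_length (by simpa [z] using hle)] at hmem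
      exact hcT (List.mem_of_mem_take hmem)
    cases T with
    | nil => exact hf.not_mem_take_one hr hpc hqc hpq (by simp [z]) hcz (by simp [hTR])
    | cons _ T =>
      -- after `c ↦ z`, the copy of `z` starting at position `|T| ≥ 1` reads `p` where `z` has `q`
      have hpre := hf.prefix_flatMap_substLetter hr hcz
      rw [hTR, List.flatMap_append, flatMap_substLetter_of_not_mem z hcT, List.flatMap_cons,
        substLetter_self] at hpre
      have := hpre.getElem hT
      exact hpq (by simpa [z, List.getElem_append_right] using this.symm)

theorem prefix_of_not_mem {c p q : S} (hpc : p ≠ c) (hqc : q ≠ c) (hpq : p ≠ q) {x : List S}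
    (hc : c ∉ x) : x <+: f x := by
  have hpre := hf.prefix_flatMap_substLetter hr hc
  rw [List.prefix_iff_eq_take] at hpre ⊢
  rwa [take_flatMap_substLetter x (hf.not_mem_take_length hr hpc hqc hpq hc)] at hpre

theorem prefix_of_forall_singleton {c₁ c₂ c₃ : S} (h12 : c₁ ≠ c₂) (h13 : c₁ ≠ c₃)
    (h23 : c₂ ≠ c₃) (x : List S) : x <+: f x := by
  have : Nontrivial S := ⟨c₁, c₂, h12⟩
  choose s hs using fun a : S => exists_ne a
  refine prefix_of_forall_map_collapse_prefix s hs fun a => ?_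
  obtain ⟨c, hca, hcs⟩ := exists_ne_ne h12 h13 h23 a (s a)
  have := hf.prefix_of_not_mem hr hca.symm hcs.symm (hs a).symm (not_mem_map_collapse hca hcs x)
  rw [← hf.map_map_eq_of_idem (collapse_collapse (hs a))]
  simpa [Function.comp_def, collapse_collapse (hs a)] using this.map (collapse a (s a))

end Prefix

theorem const_head_or_prefix_or_nil {c₁ c₂ c₃ : S} (h12 : c₁ ≠ c₂) (h13 : c₁ ≠ c₃)
    (h23 : c₂ ≠ c₃) : (∃ b, ∀ x, (f x).head? = some b) ∨ (∀ x, x <+: f x) ∨ ∀ x, f x = [] := by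
  have : Nontrivial S := ⟨c₁, c₂, h12⟩
  by_cases hnil : ∀ x, f x = []
  · exact Or.inr (Or.inr hnil)
  have hne (r : S) : (f [r]).head? ≠ none := fun hr =>
    hnil (hf.eq_nil_of_singleton_eq_nil (List.head?_eq_none_iff.mp hr))
  choose h hh using fun r => Option.ne_none_iff_exists'.mp (hne r)
  rcases forall_eq_self_or_exists_forall_eq h12 h13 h23
    (fun t s => hf.head_eq_or_eq (hh t) (hh s)) with hid | ⟨b, hb⟩
  · simp only [hid] at hh
    exact Or.inr (Or.inl (hf.prefix_of_forall_singleton hh h12 h13 h23))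
  · simp only [hb] at hh
    exact Or.inl ⟨b, hf.head?_eq_of_forall_singleton hh h12 h13 h23⟩

end

end IsRCP

end

/-- If `S` has at least 3 elements and `f` is RCP, then exactly one of the following holds:
(C₁) there is a letter `b` such that every `f x` starts with `b`;
(C₂) every `x` is a prefix of `f x`;
(C₃) `f` is constantly `ε`. -/
theorem stmt_11 {S : Type*} (c₁ c₂ c₃ : S) (h12 : c₁ ≠ c₂) (h13 : c₁ ≠ c₃) (h23 : c₂ ≠ c₃)
    (f : List S → List S) (hf : IsRCP f) :
    ((∃ b : S, ∀ x : List S, ∃ w : List S, f x = b :: w) ∧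
      ¬ (∀ x : List S, ∃ w : List S, f x = x ++ w) ∧ ¬ (∀ x : List S, f x = [])) ∨
    (¬ (∃ b : S, ∀ x : List S, ∃ w : List S, f x = b :: w) ∧
      (∀ x : List S, ∃ w : List S, f x = x ++ w) ∧ ¬ (∀ x : List S, f x = [])) ∨
    (¬ (∃ b : S, ∀ x : List S, ∃ w : List S, f x = b :: w) ∧
      ¬ (∀ x : List S, ∃ w : List S, f x = x ++ w) ∧ (∀ x : List S, f x = [])) := by
  classical
  set C₁ := ∃ b : S, ∀ x : List S, ∃ w : List S, f x = b :: w
  set C₂ := ∀ x : List S, ∃ w : List S, f x = x ++ w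
  set C₃ := ∀ x : List S, f x = []
  have some_case : C₁ ∨ C₂ ∨ C₃ := by
    rcases hf.const_head_or_prefix_or_nil h12 h13 h23 with ⟨b, hb⟩ | hpre | hnil
    · exact Or.inl ⟨b, fun x => List.head?_eq_some_iff.mp (hb x)⟩
    · refine Or.inr (Or.inl fun x => ?_)
      obtain ⟨w, hw⟩ := hpre x
      exact ⟨w, hw.symm⟩
    · exact Or.inr (Or.inr hnil)
  have head_eq {b c : S} (h₁ : ∃ w, f [c] = b :: w) (h₂ : ∃ w, f [c] = [c] ++ w) : b = c := by
    obtain ⟨w, hw⟩ := h₁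
    obtain ⟨v, hv⟩ := h₂
    exact (List.cons_eq_cons.mp (hw.symm.trans hv)).1
  have not₁₂ : C₁ → ¬C₂ := fun ⟨b, hb⟩ hC₂ =>
    h12 ((head_eq (hb _) (hC₂ _)).symm.trans (head_eq (hb _) (hC₂ _)))
  have not₁₃ : C₁ → ¬C₃ := fun ⟨b, hb⟩ hC₃ => by simpa [hC₃ []] using hb []
  have not₂₃ : C₂ → ¬C₃ := fun hC₂ hC₃ => by simpa [hC₃ [c₁]] using hC₂ [c₁]
  tauto
end
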